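/- Let α_c := (5√10 − 13)/3 and let α satisfy α_c < α ≤ 1. Then there exists δ ∈ (0, 1/2) such that 1 − 1/(α(1 + 2δ(1−δ))) > δ. -/

import Mathlib

/-!
The condition `1 - 1/(α(1 + 2δ(1-δ))) > δ` is equivalent to `α · g(δ) > 1` with
`g(δ) = (1 - δ)(1 + 2δ(1 - δ))`. The cubic `g` is maximal on `[0, 1/2]` at its critical point
`δ* = (4 - √10)/6`, where `g(δ*) = (13 + 5√10)/27 = 1/α_c`; so `δ*` works as soon as `α > α_c`.
-/

open Real

lemma lt_one_sub_one_div_of_one_lt_mul {α δ : ℝ} (hδ : δ < 1)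
    (h : 1 < α * ((1 - δ) * (1 + 2 * δ * (1 - δ)))) :
    δ < 1 - 1 / (α * (1 + 2 * δ * (1 - δ))) := by
  have hβ : 0 < α * (1 + 2 * δ * (1 - δ)) := by
    by_contra! hβ
    nlinarith [mul_nonpos_of_nonneg_of_nonpos (sub_pos.2 hδ).le hβ]
  have : 1 / (α * (1 + 2 * δ * (1 - δ))) < 1 - δ := by
    rw [div_lt_iff₀ hβ]
    linarith
  linarith

lemma sqrt_ten_mem_Ioo : √10 ∈ Set.Ioo (3 : ℝ) 4 := by
  constructor
  · rw [lt_sqrt (by norm_num)]; norm_num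
  · rw [sqrt_lt' (by norm_num)]; norm_num

lemma critical_alpha_mul_max_eq_one : (5 * √10 - 13) / 3 * ((13 + 5 * √10) / 27) = 1 := by
  linear_combination (25 / 81 : ℝ) * sq_sqrt (show (0 : ℝ) ≤ 10 by norm_num)

lemma one_sub_mul_at_critical_point :
    let δ : ℝ := (4 - √10) / 6
    (1 - δ) * (1 + 2 * δ * (1 - δ)) = (13 + 5 * √10) / 27 := by
  intro δ
  linear_combination (-√10 / 108) * sq_sqrt (show (0 : ℝ) ≤ 10 by norm_num)

theorem exists_delta_interim (α : ℝ) (hα : (5 * Real.sqrt 10 - 13) / 3 < α) :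
    ∃ δ ∈ Set.Ioo (0:ℝ) (1/2), 1 - 1 / (α * (1 + 2 * δ * (1 - δ))) > δ := by
  obtain ⟨hs3, hs4⟩ := sqrt_ten_mem_Ioo
  refine ⟨(4 - √10) / 6, ⟨by linarith, by linarith⟩, ?_⟩
  apply lt_one_sub_one_div_of_one_lt_mul (by linarith)
  rw [one_sub_mul_at_critical_point]
  calc (1 : ℝ) = (5 * √10 - 13) / 3 * ((13 + 5 * √10) / 27) := critical_alpha_mul_max_eq_one.symm
    _ < α * ((13 + 5 * √10) / 27) := by gcongr
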